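/- Let X ~ Beta(α, β) with α, β > 0. Then −α·E[((1−X)/X)·log(1−X)] + β·E[log(1−X)] = −1 − E[((1−X)/X)·log(1−X)]. -/

import Mathlib

open MeasureTheory Real Filter

noncomputable def betaB (a b : ℝ) : ℝ := Real.Gamma a * Real.Gamma b / Real.Gamma (a + b)

/-- digamma function ψ = Γ'/Γ -/
noncomputable def digamma (z : ℝ) : ℝ := deriv Real.Gamma z / Real.Gamma z

/-- Beta(a,b) probability density on (0,1). -/
noncomputable def betaPDF (a b x : ℝ) : ℝ := x ^ (a - 1) * (1 - x) ^ (b - 1) / betaB a b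

/-- Expectation of `h(X)` for `X ~ Beta(a,b)`. -/
noncomputable def betaE (a b : ℝ) (h : ℝ → ℝ) : ℝ :=
  ∫ x in Set.Ioo (0:ℝ) 1, h x * betaPDF a b x

/-- Beta(a,b) measure on ℝ. -/
noncomputable def betaMeasure (a b : ℝ) : Measure ℝ :=
  volume.withDensity (fun x => ENNReal.ofReal (Set.indicator (Set.Ioo (0:ℝ) 1) (betaPDF a b) x))

/-! Let `p` be the Beta(α, β) density and `g x = (1 - x) / x * log (1 - x)`. Since
`p' / p = (α - 1) / x - (β - 1) / (1 - x)`, the function `H x = (1 - x) log (1 - x) p x` has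
derivative `((α - 1) g x - β log (1 - x) - 1) p x` on `(0, 1)`. `H` vanishes at both ends
(`|(1 - x) log (1 - x)| ≤ x` at `0`, `(1 - x) ^ β log (1 - x) → 0` at `1`), so `∫ H' = 0`,
which is the identity once `∫ p = 1`. Integrability holds because `|g| ≤ 1` and `log (1 - x)`
costs only an arbitrarily small power of `1 - x`. -/

open Set Topology

lemma abs_mul_log_le_one_sub {u : ℝ} (h0 : 0 ≤ u) (h1 : u ≤ 1) : |u * log u| ≤ 1 - u := by
  rw [abs_of_nonpos (mul_log_nonpos h0 h1)]
  linarith [self_sub_one_le_mul_log h0]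

lemma abs_one_sub_div_mul_log_one_sub_le_one {x : ℝ} (hx : x ∈ Ioo (0 : ℝ) 1) :
    |(1 - x) / x * log (1 - x)| ≤ 1 := by
  rw [div_mul_eq_mul_div, abs_div, abs_of_pos hx.1, div_le_one hx.1]
  simpa using abs_mul_log_le_one_sub (u := 1 - x) (by linarith [hx.2]) (by linarith [hx.1])

lemma abs_log_le_rpow_neg_div {u ε : ℝ} (h0 : 0 < u) (h1 : u ≤ 1) (hε : 0 < ε) :
    |log u| ≤ u ^ (-ε) / ε := by
  rw [abs_of_nonpos (log_nonpos h0.le h1), ← log_inv, rpow_neg h0.le, ← inv_rpow h0.le]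
  exact log_le_rpow_div (by positivity) hε

section BetaIntegral

variable {a b : ℝ}

lemma ofReal_rpow_mul_one_sub_rpow {x : ℝ} (hx : x ∈ Icc (0 : ℝ) 1) :
    ((x ^ (a - 1) * (1 - x) ^ (b - 1) : ℝ) : ℂ)
      = (x : ℂ) ^ ((a : ℂ) - 1) * (1 - (x : ℂ)) ^ ((b : ℂ) - 1) := by
  rw [Complex.ofReal_mul, Complex.ofReal_cpow hx.1, Complex.ofReal_cpow (sub_nonneg.2 hx.2)]
  push_cast
  rfl

lemma integrableOn_rpow_mul_one_sub_rpow (ha : 0 < a) (hb : 0 < b) :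
    IntegrableOn (fun x : ℝ ↦ x ^ (a - 1) * (1 - x) ^ (b - 1)) (Ioo 0 1) := by
  have h := ((intervalIntegrable_iff_integrableOn_Ioc_of_le zero_le_one).1
    (Complex.betaIntegral_convergent (u := a) (v := b) (by simpa) (by simpa))).mono_set
    Ioo_subset_Ioc_self
  refine IntegrableOn.congr_fun h.re (fun x hx ↦ ?_) measurableSet_Ioo
  rw [← ofReal_rpow_mul_one_sub_rpow (Ioo_subset_Icc_self hx)]
  rfl

lemma integral_rpow_mul_one_sub_rpow (ha : 0 < a) (hb : 0 < b) :
    ∫ x in Ioo (0 : ℝ) 1, x ^ (a - 1) * (1 - x) ^ (b - 1) = betaB a b := by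
  have hBeta : Complex.betaIntegral a b
      = ((∫ x in Ioo (0 : ℝ) 1, x ^ (a - 1) * (1 - x) ^ (b - 1) : ℝ) : ℂ) := by
    rw [Complex.betaIntegral, intervalIntegral.integral_of_le zero_le_one,
      integral_Ioc_eq_integral_Ioo, ← integral_complex_ofReal]
    exact setIntegral_congr_fun measurableSet_Ioo
      fun x hx ↦ (ofReal_rpow_mul_one_sub_rpow (Ioo_subset_Icc_self hx)).symm
  have hΓ := Complex.Gamma_mul_Gamma_eq_betaIntegral (s := a) (t := b) (by simpa) (by simpa)
  rw [hBeta, ← Complex.ofReal_add, Complex.Gamma_ofReal, Complex.Gamma_ofReal,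
    Complex.Gamma_ofReal] at hΓ
  rw [betaB, eq_div_iff (Gamma_pos_of_pos (add_pos ha hb)).ne', mul_comm]
  exact_mod_cast hΓ.symm

lemma betaB_pos (ha : 0 < a) (hb : 0 < b) : 0 < betaB a b :=
  div_pos (mul_pos (Gamma_pos_of_pos ha) (Gamma_pos_of_pos hb)) (Gamma_pos_of_pos (add_pos ha hb))

end BetaIntegral

section BetaPDF

variable {a b : ℝ}

lemma integrableOn_betaPDF (ha : 0 < a) (hb : 0 < b) : IntegrableOn (betaPDF a b) (Ioo 0 1) :=
  (integrableOn_rpow_mul_one_sub_rpow ha hb).div_const _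

lemma setIntegral_betaPDF (ha : 0 < a) (hb : 0 < b) :
    ∫ x in Ioo (0 : ℝ) 1, betaPDF a b x = 1 := by
  simp only [betaPDF]
  rw [integral_div, integral_rpow_mul_one_sub_rpow ha hb, div_self (betaB_pos ha hb).ne']

lemma integrableOn_one_sub_div_mul_log_one_sub_mul_betaPDF (ha : 0 < a) (hb : 0 < b) :
    IntegrableOn (fun x ↦ (1 - x) / x * log (1 - x) * betaPDF a b x) (Ioo 0 1) :=
  Integrable.bdd_mul (c := 1) (integrableOn_betaPDF ha hb)
    (by fun_prop : Measurable fun x : ℝ ↦ (1 - x) / x * log (1 - x)).aestronglyMeasurable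
    ((ae_restrict_iff' measurableSet_Ioo).2
      (ae_of_all _ fun _ hx ↦ abs_one_sub_div_mul_log_one_sub_le_one hx))

lemma integrableOn_log_one_sub_mul_betaPDF (ha : 0 < a) (hb : 0 < b) :
    IntegrableOn (fun x ↦ log (1 - x) * betaPDF a b x) (Ioo 0 1) := by
  have hmeas : Measurable fun x ↦ log (1 - x) * betaPDF a b x := by unfold betaPDF; fun_prop
  refine ((integrableOn_rpow_mul_one_sub_rpow ha (half_pos hb)).const_mul
    (2 / b / betaB a b)).mono' hmeas.aestronglyMeasurable
    ((ae_restrict_iff' measurableSet_Ioo).2 (ae_of_all _ fun x hx ↦ ?_))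
  have hu : 0 < 1 - x := sub_pos.2 hx.2
  have hB := betaB_pos ha hb
  have hK : 0 ≤ x ^ (a - 1) * (1 - x) ^ (b - 1) :=
    mul_nonneg (rpow_nonneg hx.1.le _) (rpow_nonneg hu.le _)
  -- the logarithm is paid for with half of the exponent of `1 - x`
  calc ‖log (1 - x) * betaPDF a b x‖
      = |log (1 - x)| * (x ^ (a - 1) * (1 - x) ^ (b - 1)) / betaB a b := by
        rw [norm_mul, norm_eq_abs, norm_eq_abs, betaPDF, abs_div, abs_of_pos hB,
          abs_of_nonneg hK]
        ring
    _ ≤ (1 - x) ^ (-(b / 2)) / (b / 2) * (x ^ (a - 1) * (1 - x) ^ (b - 1)) / betaB a b := by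
        gcongr ?_ * _ / _
        exact abs_log_le_rpow_neg_div hu (by linarith [hx.1]) (half_pos hb)
    _ = 2 / b / betaB a b * (x ^ (a - 1) * (1 - x) ^ (b / 2 - 1)) := by
        rw [show b / 2 - 1 = -(b / 2) + (b - 1) by ring, rpow_add hu]
        field_simp

lemma hasDerivAt_betaPDF {x : ℝ} (hx : x ∈ Ioo (0 : ℝ) 1) :
    HasDerivAt (betaPDF a b) (betaPDF a b x * ((a - 1) / x - (b - 1) / (1 - x))) x := by
  have hu : 0 < 1 - x := sub_pos.2 hx.2
  have h1 := hasDerivAt_rpow_const (p := a - 1) (Or.inl hx.1.ne')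
  have h2 := ((hasDerivAt_id' x).const_sub 1).rpow_const (p := b - 1) (Or.inl hu.ne')
  refine ((h1.mul h2).div_const (betaB a b)).congr_deriv ?_
  unfold betaPDF
  rw [rpow_sub_one hx.1.ne' (a - 1), rpow_sub_one hu.ne' (b - 1)]
  field_simp
  ring

lemma hasDerivAt_one_sub_mul_log_one_sub_mul_betaPDF {x : ℝ} (hx : x ∈ Ioo (0 : ℝ) 1) :
    HasDerivAt (fun x ↦ (1 - x) * log (1 - x) * betaPDF a b x)
      (((a - 1) * ((1 - x) / x * log (1 - x)) - b * log (1 - x) - 1) * betaPDF a b x) x := by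
  have hu : 0 < 1 - x := sub_pos.2 hx.2
  have hmulLog := (hasDerivAt_mul_log hu.ne').comp x ((hasDerivAt_id' x).const_sub 1)
  refine (hmulLog.mul (hasDerivAt_betaPDF hx)).congr_deriv ?_
  simp only [Function.comp]
  field_simp
  ring

lemma tendsto_one_sub_mul_log_one_sub_mul_betaPDF_nhdsGT_zero (ha : 0 < a) :
    Tendsto (fun x ↦ (1 - x) * log (1 - x) * betaPDF a b x) (𝓝[>] 0) (𝓝 0) := by
  have hcont : ContinuousAt (fun x ↦ x ^ a * (1 - x) ^ (b - 1) / betaB a b) 0 :=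
    ((continuousAt_rpow_const 0 a (Or.inr ha.le)).mul
      ((continuousAt_const.sub continuousAt_id).rpow_const (Or.inl (by norm_num)))).div_const _
  have hlim : Tendsto (fun x ↦ x * betaPDF a b x) (𝓝[>] 0) (𝓝 0) := by
    refine (tendsto_nhdsWithin_of_tendsto_nhds hcont.tendsto).congr' ?_ |>.trans_eq ?_
    · filter_upwards [self_mem_nhdsWithin] with x (hx : 0 < x)
      rw [betaPDF, rpow_sub_one hx.ne']
      field_simp
    · simp [zero_rpow ha.ne']
  refine squeeze_zero_norm' ?_ (by simpa using hlim.norm)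
  filter_upwards [Ioo_mem_nhdsGT zero_lt_one] with x hx
  simp only [norm_mul, norm_eq_abs]
  gcongr
  rw [abs_of_pos hx.1]
  simpa using abs_mul_log_le_one_sub (u := 1 - x) (by linarith [hx.2]) (by linarith [hx.1])

lemma tendsto_one_sub_mul_log_one_sub_mul_betaPDF_nhdsLT_one (hb : 0 < b) :
    Tendsto (fun x ↦ (1 - x) * log (1 - x) * betaPDF a b x) (𝓝[<] 1) (𝓝 0) := by
  have hsub : Tendsto (fun x : ℝ ↦ 1 - x) (𝓝[<] 1) (𝓝[>] 0) := by
    simpa using ((continuous_sub_left (1 : ℝ)).continuousWithinAt (s := Iio 1) (x := 1)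
      ).tendsto_nhdsWithin (t := Ioi 0) fun x hx ↦ sub_pos.2 hx
  have hpow : Tendsto (fun x ↦ x ^ (a - 1) / betaB a b) (𝓝[<] 1) (𝓝 (1 / betaB a b)) := by
    simpa using tendsto_nhdsWithin_of_tendsto_nhds
      ((continuousAt_rpow_const 1 (a - 1) (Or.inl one_ne_zero)).tendsto.div_const (betaB a b))
  have hprod := ((tendsto_log_mul_rpow_nhdsGT_zero hb).comp hsub).mul hpow
  rw [zero_mul] at hprod
  refine hprod.congr' ?_
  filter_upwards [self_mem_nhdsWithin] with x (hx : x < 1)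
  have hu : 1 - x ≠ 0 := (sub_pos.2 hx).ne'
  rw [betaPDF, rpow_sub_one hu b]
  simp only [Function.comp]
  field_simp

lemma setIntegral_score_mul_betaPDF (ha : 0 < a) (hb : 0 < b) :
    ∫ x in Ioo (0 : ℝ) 1, ((a - 1) * ((1 - x) / x * log (1 - x) * betaPDF a b x)
      - b * (log (1 - x) * betaPDF a b x) - betaPDF a b x) = 0 := by
  rw [← integral_Ioc_eq_integral_Ioo, ← intervalIntegral.integral_of_le zero_le_one]
  refine (intervalIntegral.integral_eq_sub_of_hasDerivAt_of_tendsto zero_lt_one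
    (fun x hx ↦ (hasDerivAt_one_sub_mul_log_one_sub_mul_betaPDF hx).congr_deriv (by ring))
    ((intervalIntegrable_iff_integrableOn_Ioo_of_le zero_le_one).2 ?_)
    (tendsto_one_sub_mul_log_one_sub_mul_betaPDF_nhdsGT_zero ha)
    (tendsto_one_sub_mul_log_one_sub_mul_betaPDF_nhdsLT_one hb)).trans (sub_zero 0)
  exact (((integrableOn_one_sub_div_mul_log_one_sub_mul_betaPDF ha hb).const_mul (a - 1)).sub
    ((integrableOn_log_one_sub_mul_betaPDF ha hb).const_mul b)).sub (integrableOn_betaPDF ha hb)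

end BetaPDF

theorem beta_score_identity_g_one_sub (α β : ℝ) (hα : 0 < α) (hβ : 0 < β) :
    -α * betaE α β (fun x => (1 - x) / x * Real.log (1 - x))
      + β * betaE α β (fun x => Real.log (1 - x))
      = -1 - betaE α β (fun x => (1 - x) / x * Real.log (1 - x)) := by
  have hg₁ := integrableOn_one_sub_div_mul_log_one_sub_mul_betaPDF hα hβ
  have hg₂ := integrableOn_log_one_sub_mul_betaPDF hα hβ
  have hscore := setIntegral_score_mul_betaPDF hα hβ
  rw [integral_sub, integral_sub, integral_const_mul, integral_const_mul,
    setIntegral_betaPDF hα hβ] at hscore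
  · simp only [betaE]
    linear_combination -hscore
  · exact hg₁.const_mul _
  · exact hg₂.const_mul _
  · exact (hg₁.const_mul _).sub (hg₂.const_mul _)
  · exact integrableOn_betaPDF hα hβ
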